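/- arXiv:1901.08156 — 3 statements merged into one kernel-verified Lean document; each statement's English description precedes it below -/
import Mathlib

section
/- Let n ≥ 1 and let w_1 ≥ w_2 ≥ ... ≥ w_n be real numbers. Let p(x) = ∏_{k=1}^{n} (x - w_k) and let P be any real-polynomial antiderivative of p. Then there exists a real number c such that P(x) - c has all of its complex roots real if and only if P(w_j) ≥ P(w_k) for every pair of indices j, k ∈ {1, ..., n} with j even, k odd, and |j - k| ≥ 3. -/
open Polynomial

/-- A real polynomial is hyperbolic if all of its complex roots are real. -/
def Hyperbolic (p : Polynomial ℝ) : Prop :=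
  ∀ z ∈ (p.map (algebraMap ℝ ℂ)).roots, z.im = 0

/-!
Odd-indexed critical points `w k` of `P` are local minima and even-indexed ones local maxima,
and the comparisons between adjacent critical values hold automatically; so the condition says
that some `c` separates the local minima from the local maxima, i.e.
`(-1) ^ k * (P (w k) - c) ≥ 0` for all `k`. For `Q = P - c` this sign pattern is equivalent to
`Q` having `n + 1` real roots. If `Q` is real-rooted, Rolle's theorem on `(w k, ∞)` and on
`(-∞, w k)` bounds the number of roots of `Q` there by `k` and `n - k + 1`; together they force
exactly `k` roots above `w k`, hence the sign `(-1) ^ k`. Conversely, going down the critical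
points, each `w k` contributes either a root of `Q` whose multiplicity exceeds its multiplicity
as a root of `Q'` by one, or a sign change of `Q` on the next gap; this gives `n` real roots,
and a real polynomial of degree `n + 1` with `n` real roots has `n + 1`.
-/

open Set

namespace Polynomial

open Classical in
noncomputable def rootCount (q : ℝ[X]) (s : Set ℝ) : ℕ :=
  Multiset.card (q.roots.filter (· ∈ s))

theorem rootCount_union (q : ℝ[X]) {s t : Set ℝ} (h : Disjoint s t) :
    q.rootCount (s ∪ t) = q.rootCount s + q.rootCount t := by
  classical
  simp only [rootCount, ← Multiset.card_add]
  congr 1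
  ext a
  simp only [Multiset.count_add, Multiset.count_filter]
  have := h.notMem_of_mem_left (a := a)
  split_ifs <;> simp_all

theorem rootCount_univ (q : ℝ[X]) : q.rootCount univ = Multiset.card q.roots := by
  simp [rootCount]

theorem rootCount_singleton (q : ℝ[X]) (a : ℝ) : q.rootCount {a} = q.rootMultiplicity a := by
  classical
  rw [rootCount, ← count_roots, Multiset.count_eq_card_filter_eq]
  simp [eq_comm]

theorem rootCount_Ici (q : ℝ[X]) (a : ℝ) :
    q.rootCount (Ici a) = q.rootMultiplicity a + q.rootCount (Ioi a) := by
  rw [← Icc_union_Ioi_eq_Ici le_rfl, Icc_self, rootCount_union _ (by simp), rootCount_singleton]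

theorem rootCount_Ioi_eq_Ioo_add_Ici (q : ℝ[X]) {a b : ℝ} (hab : a < b) :
    q.rootCount (Ioi a) = q.rootCount (Ioo a b) + q.rootCount (Ici b) := by
  rw [← Ioo_union_Ici_eq_Ioi hab, rootCount_union _ (disjoint_left.mpr fun _ hx hx' =>
    (mem_Ici.mp hx').not_gt hx.2)]

theorem card_roots_eq_rootCount_Iio_add (q : ℝ[X]) (a : ℝ) :
    Multiset.card q.roots = q.rootCount (Iio a) + q.rootMultiplicity a + q.rootCount (Ioi a) := by
  rw [← rootCount_univ, ← Iio_union_Ici (a := a), rootCount_union _ (Iio_disjoint_Ici le_rfl),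
    rootCount_Ici, add_assoc]

theorem rootCount_mono (q : ℝ[X]) {s t : Set ℝ} (h : s ⊆ t) :
    q.rootCount s ≤ q.rootCount t := by
  classical
  exact Multiset.card_le_card (Multiset.monotone_filter_right _ fun x hx => h hx)

theorem one_le_rootCount {q : ℝ[X]} {s : Set ℝ} {x : ℝ} (hq : q ≠ 0) (hx : x ∈ s)
    (hroot : q.IsRoot x) : 1 ≤ q.rootCount s := by
  classical
  exact Multiset.card_pos_iff_exists_mem.mpr
    ⟨x, Multiset.mem_filter.mpr ⟨(mem_roots hq).mpr hroot, hx⟩⟩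

theorem rootCount_eq_sum {q : ℝ[X]} {s : Set ℝ} {F : Finset ℝ} (hFs : ↑F ⊆ s)
    (hF : ∀ x ∈ q.roots, x ∈ s → x ∈ F) :
    q.rootCount s = ∑ x ∈ F, q.rootMultiplicity x := by
  classical
  rw [rootCount, ← Multiset.sum_count_eq_card (s := F) fun x hx =>
    hF x (Multiset.mem_of_mem_filter hx) (Multiset.of_mem_filter hx)]
  refine Finset.sum_congr rfl fun x hx => ?_
  rw [Multiset.count_filter_of_pos (hFs hx), count_roots]

theorem card_filter_roots_toFinset_le_derivative_sdiff_add_one (q : ℝ[X]) (I : Set ℝ)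
    [I.OrdConnected] [DecidablePred (· ∈ I)] :
    (q.roots.toFinset.filter (· ∈ I)).card ≤
      ((derivative q).roots.toFinset.filter (· ∈ I) \
        q.roots.toFinset.filter (· ∈ I)).card + 1 := by
  rcases eq_or_ne (derivative q) 0 with hq' | hq'
  · rw [eq_C_of_derivative_eq_zero hq']
    simp
  have hq : q ≠ 0 := ne_of_apply_ne derivative (by rwa [derivative_zero])
  refine Finset.card_le_sdiff_of_interleaved fun x hx y hy hxy _ => ?_
  simp only [Finset.mem_filter, Multiset.mem_toFinset, mem_roots hq] at hx hy
  obtain ⟨z, hz, hz0⟩ := exists_deriv_eq_zero hxy q.continuousOn (hx.1.trans hy.1.symm)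
  refine ⟨z, ?_, hz⟩
  simp only [Finset.mem_filter, Multiset.mem_toFinset, mem_roots hq', IsRoot, ← q.deriv]
  exact ⟨hz0, Set.OrdConnected.out ‹_› hx.2 hy.2 (Ioo_subset_Icc_self hz)⟩

theorem rootCount_le_rootCount_derivative_add_one (q : ℝ[X]) (I : Set ℝ) [I.OrdConnected] :
    q.rootCount I ≤ (derivative q).rootCount I + 1 := by
  classical
  rcases eq_or_ne (derivative q) 0 with hq' | hq'
  · rw [eq_C_of_derivative_eq_zero hq']
    simp [rootCount]
  have hq : q ≠ 0 := ne_of_apply_ne derivative (by rwa [derivative_zero])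
  set S := q.roots.toFinset.filter (· ∈ I)
  set T := (derivative q).roots.toFinset.filter (· ∈ I)
  have hS : ∀ x ∈ S, x ∈ I ∧ q.IsRoot x := fun x hx => by
    simp only [S, Finset.mem_filter, Multiset.mem_toFinset, mem_roots hq] at hx
    exact hx.symm
  have hT : ∀ x ∈ T, x ∈ I ∧ (derivative q).IsRoot x := fun x hx => by
    simp only [T, Finset.mem_filter, Multiset.mem_toFinset, mem_roots hq'] at hx
    exact hx.symm
  calc q.rootCount I = ∑ x ∈ S, q.rootMultiplicity x :=
        rootCount_eq_sum (fun x hx => (hS x hx).1) fun x hx hxI => by simp [S, hx, hxI]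
    _ = ∑ x ∈ S, (q.rootMultiplicity x - 1) + S.card := by
        rw [Finset.card_eq_sum_ones, ← Finset.sum_add_distrib]
        refine Finset.sum_congr rfl fun x hx => ?_
        have := (rootMultiplicity_pos hq).mpr (hS x hx).2
        omega
    _ ≤ ∑ x ∈ S, (derivative q).rootMultiplicity x + ((T \ S).card + 1) := by
        gcongr with x
        · exact rootMultiplicity_sub_one_le_derivative_rootMultiplicity _ _
        · exact card_filter_roots_toFinset_le_derivative_sdiff_add_one q I
    _ ≤ ∑ x ∈ S, (derivative q).rootMultiplicity x +
          (∑ x ∈ T \ S, (derivative q).rootMultiplicity x + 1) := by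
        rw [Finset.card_eq_sum_ones]
        gcongr with x hx
        exact (rootMultiplicity_pos hq').mpr (hT x (Finset.mem_sdiff.mp hx).1).2
    _ = (derivative q).rootCount I + 1 := by
        rw [← add_assoc, ← Finset.sum_union Finset.disjoint_sdiff,
          Finset.union_sdiff_self_eq_union, rootCount_eq_sum (F := S ∪ T)]
        · intro x hx
          rcases Finset.mem_union.mp hx with hx | hx
          exacts [(hS x hx).1, (hT x hx).1]
        · intro x hx hxI
          simp [T, hx, hxI]

theorem roots_finset_prod_X_sub_C {R ι : Type*} [CommRing R] [IsDomain R] (t : Finset ι)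
    (w : ι → R) :
    (∏ i ∈ t, (X - C (w i))).roots = t.val.map w := by
  rw [Finset.prod_eq_multiset_prod, ← roots_multiset_prod_X_sub_C (t.val.map w), Multiset.map_map]
  rfl

open Classical in
theorem rootCount_finset_prod_X_sub_C {ι : Type*} (t : Finset ι) (w : ι → ℝ) (s : Set ℝ) :
    (∏ i ∈ t, (X - C (w i))).rootCount s = (t.filter (w · ∈ s)).card := by
  rw [rootCount, roots_finset_prod_X_sub_C, Multiset.filter_map, Multiset.card_map]
  rfl

theorem neg_one_pow_rootCount_Ioi_mul_eval_nonneg {q : ℝ[X]}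
    (hq : Multiset.card q.roots = q.natDegree) (hlc : 0 ≤ q.leadingCoeff) (x : ℝ) :
    0 ≤ (-1) ^ q.rootCount (Ioi x) * q.eval x := by
  classical
  have hprod : ∀ s : Multiset ℝ,
      0 ≤ (-1) ^ Multiset.card (s.filter (· ∈ Ioi x)) * (s.map (x - ·)).prod := by
    intro s
    induction s using Multiset.induction_on with
    | empty => simp
    | cons a s ih =>
      rw [Multiset.filter_cons, Multiset.map_cons, Multiset.prod_cons]
      split_ifs with ha
      · rw [Multiset.card_add, Multiset.card_singleton, pow_add, pow_one]
        nlinarith [mem_Ioi.mp ha]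
      · rw [zero_add]
        nlinarith [not_lt.mp (mt mem_Ioi.mpr ha)]
  have heval : q.eval x = q.leadingCoeff * (q.roots.map (x - ·)).prod := by
    conv_lhs => rw [← C_leadingCoeff_mul_prod_multiset_X_sub_C hq]
    simp [eval_multiset_prod, Multiset.map_map]
  rw [heval, mul_left_comm]
  exact mul_nonneg hlc (hprod _)

theorem rootMultiplicity_eq_derivative_add_one {R : Type*} [CommRing R] [IsDomain R] [CharZero R]
    {q : R[X]} (hq : q ≠ 0) {x : R} (hx : q.IsRoot x) :
    q.rootMultiplicity x = (derivative q).rootMultiplicity x + 1 := by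
  have := (rootMultiplicity_pos hq).mpr hx
  rw [derivative_rootMultiplicity_of_root hx]
  omega

theorem natDegree_eq_succ_of_derivative_monic {R : Type*} [Semiring R] [IsAddTorsionFree R]
    [Nontrivial R] {q : R[X]} (h : (derivative q).Monic) :
    q.natDegree = (derivative q).natDegree + 1 := by
  have : q.natDegree ≠ 0 := fun h0 => h.ne_zero (derivative_of_natDegree_zero h0)
  rw [natDegree_derivative]
  omega

theorem leadingCoeff_pos_of_derivative_monic {q : ℝ[X]} (h : (derivative q).Monic) :
    0 < q.leadingCoeff := by
  have hcoeff := coeff_derivative q (derivative q).natDegree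
  rw [h.coeff_natDegree, ← natDegree_eq_succ_of_derivative_monic h] at hcoeff
  rw [leadingCoeff]
  nlinarith [show (0 : ℝ) ≤ (derivative q).natDegree from Nat.cast_nonneg _]

theorem exists_isRoot_gt_of_eval_neg {q : ℝ[X]} (hlc : 0 < q.leadingCoeff) {x : ℝ}
    (hx : q.eval x < 0) : ∃ r, x < r ∧ q.IsRoot r := by
  have hdeg : 0 < q.degree := by
    by_contra! h
    rw [eq_C_of_degree_le_zero h, eval_C] at hx
    rw [eq_C_of_degree_le_zero h, leadingCoeff_C] at hlc
    linarith
  obtain ⟨y, hy, hxy⟩ :=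
    ((tendsto_atTop_of_leadingCoeff_nonneg q hdeg hlc.le).eventually_gt_atTop 0 |>.and
      (Filter.eventually_gt_atTop x)).exists
  obtain ⟨r, hr, hr0⟩ := intermediate_value_Ioo hxy.le q.continuousOn ⟨hx, hy⟩
  exact ⟨r, hr.1, hr0⟩

theorem exists_isRoot_mem_Ioo_of_eval_mul_neg {q : ℝ[X]} {a b : ℝ} (hab : a < b)
    (h : q.eval a * q.eval b < 0) : ∃ r ∈ Ioo a b, q.IsRoot r := by
  rcases mul_neg_iff.mp h with ⟨ha, hb⟩ | ⟨ha, hb⟩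
  · exact intermediate_value_Ioo' hab.le q.continuousOn ⟨hb, ha⟩
  · exact intermediate_value_Ioo hab.le q.continuousOn ⟨ha, hb⟩

theorem card_roots_eq_natDegree_of_natDegree_le {K : Type*} [Field K] {q : K[X]}
    (h : q.natDegree ≤ Multiset.card q.roots + 1) : Multiset.card q.roots = q.natDegree := by
  obtain ⟨r, hr⟩ := prod_multiset_X_sub_C_dvd q
  rcases eq_or_ne q 0 with rfl | hq
  · simp
  have hprod0 := left_ne_zero_of_mul (hr ▸ hq)
  have hr0 := right_ne_zero_of_mul (hr ▸ hq)
  have hroots : r.roots = 0 := by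
    have := congrArg roots hr
    rw [roots_mul (hr ▸ hq), roots_multiset_prod_X_sub_C] at this
    simpa using this
  have hdeg : q.natDegree = Multiset.card q.roots + r.natDegree := by
    conv_lhs => rw [hr]
    rw [natDegree_mul hprod0 hr0, natDegree_multiset_prod_X_sub_C_eq_card]
  have : r.natDegree ≠ 1 := fun h1 => by
    obtain ⟨x, hx⟩ := exists_root_of_degree_eq_one (degree_eq_iff_natDegree_eq hr0 |>.mpr h1)
    simpa [hroots] using (mem_roots hr0).mpr hx
  omega

end Polynomial

theorem hyperbolic_iff_card_roots (q : ℝ[X]) :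
    Hyperbolic q ↔ Multiset.card q.roots = q.natDegree := by
  have hcard : Multiset.card (q.map (algebraMap ℝ ℂ)).roots = q.natDegree := by
    rw [← (IsAlgClosed.splits _).natDegree_eq_card_roots, natDegree_map]
  constructor
  · intro hq
    refine le_antisymm (card_roots' q) (hcard ▸ ?_)
    calc Multiset.card (q.map (algebraMap ℝ ℂ)).roots
        ≤ Multiset.card (q.roots.map (algebraMap ℝ ℂ)) := by
          refine Multiset.card_le_card (Multiset.le_iff_count.mpr fun z => ?_)
          by_cases hz : z ∈ (q.map (algebraMap ℝ ℂ)).roots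
          · obtain ⟨r, rfl⟩ : ∃ r : ℝ, algebraMap ℝ ℂ r = z :=
              ⟨z.re, Complex.ext rfl (hq z hz).symm⟩
            rw [Multiset.count_map_eq_count' _ _ (algebraMap ℝ ℂ).injective, count_roots,
              count_roots, ← eq_rootMultiplicity_map (algebraMap ℝ ℂ).injective]
          · simp [Multiset.count_eq_zero.mpr hz]
      _ = Multiset.card q.roots := Multiset.card_map _ _
  · intro hq z hz
    rw [(splits_iff_card_roots.mpr hq).roots_map_of_injective (algebraMap ℝ ℂ).injective] at hz
    obtain ⟨r, -, rfl⟩ := Multiset.mem_map.mp hz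
    simp

section Alternating

variable {n : ℕ} {w : ℕ → ℝ}

theorem rootCount_prod_Ioi_le (hw : AntitoneOn w (Icc 1 n)) {k : ℕ} (hk : k ∈ Finset.Icc 1 n) :
    (∏ i ∈ Finset.Icc 1 n, (X - C (w i))).rootCount (Ioi (w k)) ≤ k - 1 := by
  classical
  rw [rootCount_finset_prod_X_sub_C, ← Nat.card_Ico]
  refine Finset.card_le_card fun i hi => ?_
  obtain ⟨hi, hik⟩ := Finset.mem_filter.mp hi
  refine Finset.mem_Ico.mpr ⟨(Finset.mem_Icc.mp hi).1, lt_of_not_ge fun hki => ?_⟩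
  exact (hw (by simpa using hk) (by simpa using hi) hki).not_gt hik

theorem rootCount_prod_Iio_le (hw : AntitoneOn w (Icc 1 n)) {k : ℕ} (hk : k ∈ Finset.Icc 1 n) :
    (∏ i ∈ Finset.Icc 1 n, (X - C (w i))).rootCount (Iio (w k)) ≤ n - k := by
  classical
  rw [rootCount_finset_prod_X_sub_C, ← Nat.card_Ioc]
  refine Finset.card_le_card fun i hi => ?_
  obtain ⟨hi, hik⟩ := Finset.mem_filter.mp hi
  refine Finset.mem_Ioc.mpr ⟨lt_of_not_ge fun hik' => ?_, (Finset.mem_Icc.mp hi).2⟩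
  exact (hw (by simpa using hi) (by simpa using hk) hik').not_gt hik

theorem le_rootCount_prod_Ici (hw : AntitoneOn w (Icc 1 n)) {k : ℕ} (hk : k ∈ Finset.Icc 1 n) :
    k ≤ (∏ i ∈ Finset.Icc 1 n, (X - C (w i))).rootCount (Ici (w k)) := by
  classical
  rw [rootCount_finset_prod_X_sub_C]
  calc k = (Finset.Icc 1 k).card := by simp
    _ ≤ _ := Finset.card_le_card fun i hi => by
      have hk' := Finset.mem_Icc.mp hk
      have hi' := Finset.mem_Icc.mp hi
      exact Finset.mem_filter.mpr ⟨Finset.mem_Icc.mpr ⟨hi'.1, hi'.2.trans hk'.2⟩,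
        hw (by simp; omega) (by simpa using hk) hi'.2⟩

theorem rootCount_prod_Ioi_eq_of_mem_Ioo (hw : AntitoneOn w (Icc 1 n)) {m : ℕ} (hm : 1 ≤ m)
    (hmn : m + 1 ≤ n) {y : ℝ} (hy : y ∈ Ioo (w (m + 1)) (w m)) :
    (∏ i ∈ Finset.Icc 1 n, (X - C (w i))).rootCount (Ioi y) = m := by
  classical
  rw [rootCount_finset_prod_X_sub_C]
  convert Nat.card_Icc 1 m using 2
  · ext i
    simp only [Finset.mem_filter, Finset.mem_Icc, mem_Ioi]
    constructor
    · rintro ⟨hi, hyi⟩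
      refine ⟨hi.1, le_of_not_gt fun hmi => ?_⟩
      exact (hw (by simp; omega) (by simpa using hi) hmi).not_gt (hy.1.trans hyi)
    · rintro ⟨hi1, him⟩
      exact ⟨⟨hi1, by omega⟩, hy.2.trans_le (hw (by simp; omega) (by simp; omega) him)⟩
  · omega

variable {Q : ℝ[X]}

theorem natDegree_eq_of_derivative_eq_prod
    (hQ : derivative Q = ∏ i ∈ Finset.Icc 1 n, (X - C (w i))) : Q.natDegree = n + 1 := by
  rw [natDegree_eq_succ_of_derivative_monic (hQ ▸ monic_prod_X_sub_C _ _), hQ,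
    natDegree_finsetProd_X_sub_C_eq_card]
  simp

theorem isRoot_of_apply_eq (hw : AntitoneOn w (Icc 1 n))
    (hsign : ∀ k ∈ Finset.Icc 1 n, 0 ≤ (-1) ^ k * Q.eval (w k)) {i k : ℕ}
    (hi : i ∈ Finset.Icc 1 n) (hk : k ∈ Finset.Icc 1 n) (hik : i < k) (h : w i = w k) :
    Q.IsRoot (w k) := by
  have hi' := Finset.mem_Icc.mp hi
  have hk' := Finset.mem_Icc.mp hk
  have hsucc : w (i + 1) = w i := le_antisymm (hw (by simpa using hi) (by simp; omega) (by omega))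
    (h ▸ hw (by simp; omega) (by simpa using hk) hik)
  have h1 := hsign i hi
  have h2 := hsign (i + 1) (by simp; omega)
  rw [hsucc, pow_succ] at h2
  rw [IsRoot, ← h]
  rcases neg_one_pow_eq_or ℝ i with h' | h' <;> rw [h'] at h1 h2 <;> linarith

theorem rootMultiplicity_derivative_le_one (hw : AntitoneOn w (Icc 1 n))
    (hQ : derivative Q = ∏ i ∈ Finset.Icc 1 n, (X - C (w i)))
    (hsign : ∀ k ∈ Finset.Icc 1 n, 0 ≤ (-1) ^ k * Q.eval (w k)) {k : ℕ}
    (hk : k ∈ Finset.Icc 1 n) (hroot : ¬ Q.IsRoot (w k)) :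
    (derivative Q).rootMultiplicity (w k) ≤ 1 := by
  classical
  rw [← rootCount_singleton, hQ, rootCount_finset_prod_X_sub_C, Finset.card_le_one]
  suffices ∀ i ∈ Finset.Icc 1 n, w i = w k → i = k by
    intro i hi j hj
    rw [this i (Finset.mem_filter.mp hi).1 (Finset.mem_filter.mp hi).2,
      this j (Finset.mem_filter.mp hj).1 (Finset.mem_filter.mp hj).2]
  intro i hi hik
  rcases lt_trichotomy i k with h | h | h
  · exact (hroot (isRoot_of_apply_eq hw hsign hi hk h hik)).elim
  · exact h
  · exact (hroot (hik ▸ isRoot_of_apply_eq hw hsign hk hi h hik.symm)).elim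

theorem eval_mul_eval_succ_neg (hsign : ∀ k ∈ Finset.Icc 1 n, 0 ≤ (-1) ^ k * Q.eval (w k))
    {k : ℕ} (hk : 1 ≤ k) (hkn : k + 1 ≤ n) (h : ¬ Q.IsRoot (w k))
    (h' : ¬ Q.IsRoot (w (k + 1))) : Q.eval (w k) * Q.eval (w (k + 1)) < 0 := by
  have ha := (hsign k (by simp; omega)).lt_of_ne' (mul_ne_zero (by simp) h)
  have hb := (hsign (k + 1) (by simp; omega)).lt_of_ne' (mul_ne_zero (by simp) h')
  rw [pow_succ] at hb
  rcases neg_one_pow_eq_or ℝ k with hs | hs <;> rw [hs] at ha hb <;> nlinarith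

def EnoughRootsAbove (Q : ℝ[X]) (x : ℝ) : Prop :=
  (derivative Q).rootCount (Ici x) ≤ Q.rootCount (Ici x) ∧
    (Q.IsRoot x → (derivative Q).rootCount (Ici x) < Q.rootCount (Ici x))

theorem enoughRootsAbove_one (hw : AntitoneOn w (Icc 1 n))
    (hQ : derivative Q = ∏ i ∈ Finset.Icc 1 n, (X - C (w i)))
    (hsign : ∀ k ∈ Finset.Icc 1 n, 0 ≤ (-1) ^ k * Q.eval (w k)) (hn : 1 ≤ n) :
    EnoughRootsAbove Q (w 1) := by
  have hmonic : (derivative Q).Monic := hQ ▸ monic_prod_X_sub_C _ _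
  have hQ0 : Q ≠ 0 := fun h => hmonic.ne_zero (by rw [h, derivative_zero])
  have h1 : 1 ∈ Finset.Icc 1 n := by simp [hn]
  have hnone : (derivative Q).rootCount (Ioi (w 1)) = 0 := by
    simpa [hQ] using rootCount_prod_Ioi_le hw h1
  rw [EnoughRootsAbove, rootCount_Ici Q, rootCount_Ici (derivative Q), hnone]
  by_cases hroot : Q.IsRoot (w 1)
  · rw [rootMultiplicity_eq_derivative_add_one hQ0 hroot]
    omega
  · have hmult := rootMultiplicity_derivative_le_one hw hQ hsign h1 hroot
    have hneg : Q.eval (w 1) < 0 := by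
      have := (hsign 1 h1).lt_of_ne' (mul_ne_zero (by simp) hroot)
      linarith
    obtain ⟨r, hr, hrroot⟩ :=
      exists_isRoot_gt_of_eval_neg (leadingCoeff_pos_of_derivative_monic hmonic) hneg
    have := one_le_rootCount hQ0 (mem_Ioi.mpr hr) hrroot
    exact ⟨by omega, fun h => (hroot h).elim⟩

theorem enoughRootsAbove_succ (hw : AntitoneOn w (Icc 1 n))
    (hQ : derivative Q = ∏ i ∈ Finset.Icc 1 n, (X - C (w i)))
    (hsign : ∀ k ∈ Finset.Icc 1 n, 0 ≤ (-1) ^ k * Q.eval (w k)) {k : ℕ} (hk : 1 ≤ k)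
    (hkn : k + 1 ≤ n) (ih : EnoughRootsAbove Q (w k)) : EnoughRootsAbove Q (w (k + 1)) := by
  have hmonic : (derivative Q).Monic := hQ ▸ monic_prod_X_sub_C _ _
  have hQ0 : Q ≠ 0 := fun h => hmonic.ne_zero (by rw [h, derivative_zero])
  have hk' : k ∈ Finset.Icc 1 n := by simp; omega
  have hk1 : k + 1 ∈ Finset.Icc 1 n := by simp; omega
  by_cases heq : w (k + 1) = w k
  · rwa [heq]
  have hlt : w (k + 1) < w k :=
    lt_of_le_of_ne (hw (by simpa using hk') (by simpa using hk1) (by omega)) heq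
  have hcrit :
      (derivative Q).rootCount (Ioi (w (k + 1))) ≤ (derivative Q).rootCount (Ici (w k)) := by
    have := rootCount_prod_Ioi_le hw hk1
    have := le_rootCount_prod_Ici hw hk'
    rw [hQ]
    omega
  have hsplit := rootCount_Ioi_eq_Ioo_add_Ici Q hlt
  obtain ⟨ih, ih'⟩ := ih
  rw [EnoughRootsAbove, rootCount_Ici Q, rootCount_Ici (derivative Q)]
  by_cases hroot : Q.IsRoot (w (k + 1))
  · rw [rootMultiplicity_eq_derivative_add_one hQ0 hroot]
    omega
  · have hmult := rootMultiplicity_derivative_le_one hw hQ hsign hk1 hroot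
    rw [rootMultiplicity_eq_zero hroot]
    have : Q.IsRoot (w k) ∨ 1 ≤ Q.rootCount (Ioo (w (k + 1)) (w k)) := by
      by_cases hroot' : Q.IsRoot (w k)
      · exact Or.inl hroot'
      obtain ⟨r, hr, hrroot⟩ := exists_isRoot_mem_Ioo_of_eval_mul_neg hlt
        (mul_comm (Q.eval (w k)) _ ▸ eval_mul_eval_succ_neg hsign hk hkn hroot' hroot)
      exact Or.inr (one_le_rootCount hQ0 hr hrroot)
    refine ⟨?_, fun h => (hroot h).elim⟩
    rcases this with h | h
    · have := ih' h
      omega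
    · omega

theorem card_roots_eq_natDegree_of_alternating (hw : AntitoneOn w (Icc 1 n))
    (hQ : derivative Q = ∏ i ∈ Finset.Icc 1 n, (X - C (w i)))
    (hsign : ∀ k ∈ Finset.Icc 1 n, 0 ≤ (-1) ^ k * Q.eval (w k)) :
    Multiset.card Q.roots = Q.natDegree := by
  have hdeg := natDegree_eq_of_derivative_eq_prod hQ
  refine card_roots_eq_natDegree_of_natDegree_le (hdeg ▸ Nat.succ_le_succ ?_)
  rcases n.eq_zero_or_pos with rfl | hn
  · exact Nat.zero_le _
  have hall : ∀ k, 1 ≤ k → k ≤ n → EnoughRootsAbove Q (w k) := by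
    intro k hk
    induction k, hk using Nat.le_induction with
    | base => exact fun _ => enoughRootsAbove_one hw hQ hsign hn
    | succ k hk ih => exact fun hkn => enoughRootsAbove_succ hw hQ hsign hk hkn (ih (by omega))
  calc n ≤ (derivative Q).rootCount (Ici (w n)) :=
        hQ ▸ le_rootCount_prod_Ici hw (by simp; omega)
    _ ≤ Q.rootCount (Ici (w n)) := (hall n hn le_rfl).1
    _ ≤ Multiset.card Q.roots := rootCount_univ Q ▸ rootCount_mono Q (subset_univ _)

theorem alternating_of_card_roots_eq_natDegree (hw : AntitoneOn w (Icc 1 n))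
    (hQ : derivative Q = ∏ i ∈ Finset.Icc 1 n, (X - C (w i)))
    (hroots : Multiset.card Q.roots = Q.natDegree) :
    ∀ k ∈ Finset.Icc 1 n, 0 ≤ (-1) ^ k * Q.eval (w k) := by
  intro k hk
  by_cases hroot : Q.IsRoot (w k)
  · simp [hroot.eq_zero]
  have hmonic : (derivative Q).Monic := hQ ▸ monic_prod_X_sub_C _ _
  have hdeg := natDegree_eq_of_derivative_eq_prod hQ
  have hcount : Q.rootCount (Ioi (w k)) = k := by
    have htotal := card_roots_eq_rootCount_Iio_add Q (w k)
    have habove := rootCount_le_rootCount_derivative_add_one Q (Ioi (w k))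
    have hbelow := rootCount_le_rootCount_derivative_add_one Q (Iio (w k))
    have habove' := rootCount_prod_Ioi_le hw hk
    have hbelow' := rootCount_prod_Iio_le hw hk
    have := Finset.mem_Icc.mp hk
    rw [← hQ] at habove' hbelow'
    rw [rootMultiplicity_eq_zero hroot, hroots, hdeg] at htotal
    omega
  simpa [hcount] using neg_one_pow_rootCount_Ioi_mul_eval_nonneg hroots
    (leadingCoeff_pos_of_derivative_monic hmonic).le (w k)

theorem hyperbolic_iff_alternating (hw : AntitoneOn w (Icc 1 n))
    (hQ : derivative Q = ∏ i ∈ Finset.Icc 1 n, (X - C (w i))) :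
    Hyperbolic Q ↔ ∀ k ∈ Finset.Icc 1 n, 0 ≤ (-1) ^ k * Q.eval (w k) :=
  (hyperbolic_iff_card_roots Q).trans ⟨alternating_of_card_roots_eq_natDegree hw hQ,
    card_roots_eq_natDegree_of_alternating hw hQ⟩

theorem neg_one_pow_mul_eval_sub_eval_succ_nonneg (hw : AntitoneOn w (Icc 1 n))
    (hQ : derivative Q = ∏ i ∈ Finset.Icc 1 n, (X - C (w i))) {m : ℕ} (hm : 1 ≤ m)
    (hmn : m + 1 ≤ n) : 0 ≤ (-1) ^ m * (Q.eval (w m) - Q.eval (w (m + 1))) := by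
  have hroots : Multiset.card (derivative Q).roots = (derivative Q).natDegree := by
    rw [hQ, roots_finset_prod_X_sub_C, natDegree_finsetProd_X_sub_C_eq_card, Multiset.card_map,
      Finset.card_val]
  have hlc : 0 ≤ (derivative Q).leadingCoeff := by
    rw [(hQ ▸ monic_prod_X_sub_C _ _ : (derivative Q).Monic).leadingCoeff]
    exact zero_le_one
  have hle : w (m + 1) ≤ w m := hw (by simp; omega) (by simp; omega) (by omega)
  have hmono : MonotoneOn (fun y => (-1) ^ m * Q.eval y) (Icc (w (m + 1)) (w m)) := by
    refine monotoneOn_of_deriv_nonneg (convex_Icc _ _) (by fun_prop) (by fun_prop) fun y hy => ?_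
    rw [interior_Icc] at hy
    have := neg_one_pow_rootCount_Ioi_mul_eval_nonneg hroots hlc y
    rw [hQ, rootCount_prod_Ioi_eq_of_mem_Ioo hw hm hmn hy, ← hQ] at this
    simpa using this
  have := hmono ⟨le_rfl, hle⟩ ⟨hle, le_rfl⟩ hle
  dsimp only at this
  linarith

end Alternating

theorem Finset.exists_forall_le_and_forall_ge {ι : Type*} {s t : Finset ι} {f g : ι → ℝ}
    (h : ∀ i ∈ s, ∀ j ∈ t, f i ≤ g j) :
    ∃ c, (∀ i ∈ s, f i ≤ c) ∧ ∀ j ∈ t, c ≤ g j := by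
  by_cases hs : s.Nonempty
  · exact ⟨s.sup' hs f, fun i hi => Finset.le_sup' f hi,
      fun j hj => Finset.sup'_le hs f fun i hi => h i hi j hj⟩
  · obtain ⟨c, hc⟩ := (t.image g).bddBelow
    refine ⟨c, fun i hi => (hs ⟨i, hi⟩).elim, fun j hj => hc ?_⟩
    exact Finset.mem_coe.mpr (Finset.mem_image_of_mem g hj)

theorem apply_odd_le_apply_even {n : ℕ} {f : ℕ → ℝ}
    (hadj : ∀ m, 1 ≤ m → m + 1 ≤ n → 0 ≤ (-1) ^ m * (f m - f (m + 1)))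
    (hfar : ∀ j ∈ Finset.Icc 1 n, ∀ k ∈ Finset.Icc 1 n, Even j → Odd k →
      (3 : ℤ) ≤ |(j : ℤ) - (k : ℤ)| → f k ≤ f j)
    {j k : ℕ} (hj : j ∈ Finset.Icc 1 n) (hk : k ∈ Finset.Icc 1 n) (hj2 : Even j)
    (hk2 : Odd k) : f k ≤ f j := by
  have hj' := Finset.mem_Icc.mp hj
  have hk' := Finset.mem_Icc.mp hk
  by_cases hsucc : j = k + 1
  · have := hadj k hk'.1 (by omega)
    rw [hk2.neg_one_pow, ← hsucc] at this
    linarith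
  by_cases hpred : k = j + 1
  · have := hadj j hj'.1 (by omega)
    rw [hj2.neg_one_pow, ← hpred] at this
    linarith
  refine hfar j hj k hk hj2 hk2 ?_
  obtain ⟨a, rfl⟩ := hj2
  obtain ⟨b, rfl⟩ := hk2
  rw [le_abs]
  omega

theorem exists_neg_one_pow_mul_sub_nonneg_iff {n : ℕ} {f : ℕ → ℝ}
    (hadj : ∀ m, 1 ≤ m → m + 1 ≤ n → 0 ≤ (-1) ^ m * (f m - f (m + 1))) :
    (∃ c, ∀ k ∈ Finset.Icc 1 n, 0 ≤ (-1) ^ k * (f k - c)) ↔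
      ∀ j ∈ Finset.Icc 1 n, ∀ k ∈ Finset.Icc 1 n, Even j → Odd k →
        (3 : ℤ) ≤ |(j : ℤ) - (k : ℤ)| → f k ≤ f j := by
  constructor
  · rintro ⟨c, hc⟩ j hj k hk hj2 hk2 -
    have h1 := hc j hj
    have h2 := hc k hk
    rw [hj2.neg_one_pow] at h1
    rw [hk2.neg_one_pow] at h2
    linarith
  · intro hfar
    obtain ⟨c, hodd, heven⟩ := Finset.exists_forall_le_and_forall_ge
      (s := (Finset.Icc 1 n).filter Odd) (t := (Finset.Icc 1 n).filter Even)
      fun k hk j hj => apply_odd_le_apply_even hadj hfar (Finset.mem_filter.mp hj).1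
        (Finset.mem_filter.mp hk).1 (Finset.mem_filter.mp hj).2 (Finset.mem_filter.mp hk).2
    refine ⟨c, fun k hk => ?_⟩
    rcases Nat.even_or_odd k with hk2 | hk2
    · rw [hk2.neg_one_pow, one_mul, sub_nonneg]
      exact heven k (Finset.mem_filter.mpr ⟨hk, hk2⟩)
    · rw [hk2.neg_one_pow, neg_one_mul, neg_nonneg, sub_nonpos]
      exact hodd k (Finset.mem_filter.mpr ⟨hk, hk2⟩)

theorem stmt_2_general (n : ℕ) (w : ℕ → ℝ)
    (hw : ∀ i ∈ Finset.Ico 1 n, w (i + 1) ≤ w i)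
    (p P : Polynomial ℝ)
    (hp : p = ∏ k ∈ Finset.Icc 1 n, (X - C (w k)))
    (hP : derivative P = p) :
    (∃ c : ℝ, Hyperbolic (P - C c)) ↔
      (∀ j ∈ Finset.Icc 1 n, ∀ k ∈ Finset.Icc 1 n, Even j → Odd k →
        (3 : ℤ) ≤ |(j : ℤ) - (k : ℤ)| → P.eval (w k) ≤ P.eval (w j)) := by
  have hw' : AntitoneOn w (Icc 1 n) := antitoneOn_of_add_one_le ordConnected_Icc
    fun i _ hi hi1 => hw i (Finset.mem_Ico.mpr ⟨hi.1, hi1.2⟩)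
  subst hp
  have hshift (c : ℝ) : derivative (P - C c) = ∏ k ∈ Finset.Icc 1 n, (X - C (w k)) := by
    rw [derivative_sub, derivative_C, sub_zero, hP]
  simp_rw [hyperbolic_iff_alternating hw' (hshift _), eval_sub, eval_C]
  exact exists_neg_one_pow_mul_sub_nonneg_iff fun m hm hmn =>
    neg_one_pow_mul_eval_sub_eval_succ_nonneg hw' hP hm hmn

theorem stmt_2 (n : ℕ) (hn : 1 ≤ n) (w : ℕ → ℝ)
    (hw : ∀ i ∈ Finset.Ico 1 n, w (i + 1) ≤ w i)
    (p P : Polynomial ℝ)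
    (hp : p = ∏ k ∈ Finset.Icc 1 n, (X - C (w k)))
    (hP : derivative P = p) :
    (∃ c : ℝ, Hyperbolic (P - C c)) ↔
      (∀ j ∈ Finset.Icc 1 n, ∀ k ∈ Finset.Icc 1 n, Even j → Odd k →
        (3 : ℤ) ≤ |(j : ℤ) - (k : ℤ)| → P.eval (w k) ≤ P.eval (w j)) :=
  stmt_2_general n w hw p P hp hP
end

section
/- Let w_1 ≥ w_2 ≥ w_3 ≥ w_4 be real numbers and let p(x) = (x - w_1)(x - w_2)(x - w_3)(x - w_4). Then p has a hyperbolic antiderivative if and only if wᵀ A w ≥ 0, where w = (w_1, w_2, w_3, w_4) and A is the symmetric 4×4 matrix with rows (6, -5, -5, 4), (-5, 0, 10, -5), (-5, 10, 0, -5), (4, -5, -5, 6). -/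
open Polynomial

/-!
The antiderivatives of `p` are `P₀ - k`, where `P₀` is the one vanishing at `0`. As `p` is
`≥ 0` on `(-∞, w₄] ∪ [w₃, w₂] ∪ [w₁, ∞)` and `≤ 0` elsewhere, `P₀ - k` is hyperbolic as soon as
it is `≥ 0` at the local maxima `w₄, w₂` and `≤ 0` at the local minima `w₃, w₁`: the intermediate
value theorem then yields five roots interlacing with the critical points, and a root caught at a
critical point of multiplicity `m` is a root of multiplicity `m + 1`. Conversely, by Gauss–Lucas a
hyperbolic `P` has a root `≥ w₁` and a root `≤ w₄`, whence `P(w₁) ≤ 0 ≤ P(w₄)`. So a hyperbolic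
antiderivative exists iff `P₀(w₁) ≤ P₀(w₄)`, and `P₀(w₄) - P₀(w₁) = (w₁ - w₄)³ wᵀAw / 120`.
-/

open Finset in
theorem Fin.card_filter_eq_le_card_filter_eq_add_one {α : Type*} [PartialOrder α] [DecidableEq α]
    {n : ℕ} {r : Fin (n + 1) → α} {c : Fin n → α} (hrc : ∀ i, r i.castSucc ≤ c i)
    (hcr : ∀ i, c i ≤ r i.succ) (t : α) :
    #{i | r i = t} ≤ #{i | c i = t} + 1 := by
  have hmono : Monotone r := Fin.monotone_iff_le_succ.2 fun i ↦ (hrc i).trans (hcr i)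
  set S : Finset (Fin (n + 1)) := {i | r i = t}
  set T : Finset (Fin n) := {i | c i = t}
  rcases S.eq_empty_or_nonempty with hS | hS
  · simp [hS]
  have hsub : S ⊆ insert (S.min' hS) (T.map (Fin.succEmb n)) := by
    intro i hi
    rcases (S.min'_le i hi).eq_or_lt with h | h
    · exact mem_insert.2 (Or.inl h.symm)
    obtain ⟨j, rfl⟩ := Fin.exists_succ_eq.2 (Fin.ne_zero_of_lt h)
    have hmin : r (S.min' hS) = t := (mem_filter.1 (S.min'_mem hS)).2
    have hj : c j = t := le_antisymm ((hcr j).trans_eq (mem_filter.1 hi).2)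
      (hmin ▸ (hmono (Fin.le_castSucc_iff.2 h)).trans (hrc j))
    simp [T, hj]
  calc #S ≤ #(insert (S.min' hS) (T.map (Fin.succEmb n))) := card_le_card hsub
    _ ≤ #T + 1 := by
      grw [card_insert_le, card_map]

theorem hyperbolic_of_card_roots {P : ℝ[X]} (h : Multiset.card P.roots = P.natDegree) :
    Hyperbolic P := by
  intro z hz
  rw [← roots_map_of_injective_of_card_eq_natDegree (algebraMap ℝ ℂ).injective h] at hz
  obtain ⟨x, -, rfl⟩ := Multiset.mem_map.1 hz
  simp

theorem natDegree_eq_of_derivative_eq_prod_s6 {n : ℕ} {P : ℝ[X]} {c : Fin n → ℝ}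
    (hP : derivative P = ∏ i, (X - C (c i))) : P.natDegree = n + 1 := by
  have h := congrArg natDegree hP
  rw [natDegree_derivative, natDegree_finsetProd_X_sub_C_eq_card, Finset.card_univ,
    Fintype.card_fin] at h
  have hne : P.natDegree ≠ 0 := by
    intro h0
    exact (monic_prod_of_monic _ _ fun i _ ↦ monic_X_sub_C (c i)).ne_zero
      (hP ▸ derivative_eq_zero.2 h0)
  omega

theorem leadingCoeff_pos_of_monic_derivative {P : ℝ[X]} (h : (derivative P).Monic) :
    0 < P.leadingCoeff := by
  have hlc := h.leadingCoeff
  rw [leadingCoeff_derivative] at hlc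
  exact pos_of_mul_pos_left (hlc ▸ one_pos) (Nat.cast_nonneg _)

open Finset in
theorem hyperbolic_of_interlacing {n : ℕ} {P : ℝ[X]} {c : Fin n → ℝ}
    (hP : derivative P = ∏ i, (X - C (c i))) {r : Fin (n + 1) → ℝ} (hr : ∀ i, P.IsRoot (r i))
    (hrc : ∀ i, r i.castSucc ≤ c i) (hcr : ∀ i, c i ≤ r i.succ) : Hyperbolic P := by
  have hdeg := natDegree_eq_of_derivative_eq_prod_s6 hP
  have hP0 : P ≠ 0 := by rintro rfl; simp at hdeg
  suffices hle : univ.val.map r ≤ P.roots by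
    refine hyperbolic_of_card_roots (le_antisymm (card_roots' P) ?_)
    simpa [hdeg] using Multiset.card_le_card hle
  have hcrit : (derivative P).roots = univ.val.map c := by
    rw [hP, ← roots_multiset_prod_X_sub_C (univ.val.map c), Multiset.map_map]
    rfl
  refine Multiset.le_iff_count.2 fun t ↦ ?_
  by_cases ht : P.IsRoot t
  · have hmult := derivative_rootMultiplicity_of_root ht
    have hpos := (rootMultiplicity_pos hP0).2 ht
    rw [← count_roots, hcrit] at hmult
    simp only [Multiset.count_map, eq_comm (a := t), ← filter_val, ← card_def] at hmult ⊢
    have hcount := Fin.card_filter_eq_le_card_filter_eq_add_one hrc hcr t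
    rw [count_roots]
    omega
  · rw [Multiset.count_eq_zero_of_notMem]
    · exact Nat.zero_le _
    simp only [Multiset.mem_map, not_exists, not_and]
    exact fun i _ hi ↦ ht (hi ▸ hr i)

theorem exists_mem_roots_re_le_and_re_ge_of_isRoot_derivative {P : ℂ[X]} (hP : 0 < P.degree)
    {z : ℂ} (hz : (derivative P).IsRoot z) :
    (∃ w ∈ P.roots, w.re ≤ z.re) ∧ ∃ w ∈ P.roots, z.re ≤ w.re := by
  have hP0 : P ≠ 0 := ne_zero_of_degree_gt hP
  have hP' : derivative P ≠ 0 :=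
    derivative_ne_zero.2 (natDegree_pos_iff_degree_pos.2 hP).ne'
  have hhull : z ∈ convexHull ℝ (P.rootSet ℂ) :=
    rootSet_derivative_subset_convexHull_rootSet hP (by simpa [mem_rootSet, hP'] using hz)
  have mem_roots_of_mem_rootSet {w : ℂ} (hw : w ∈ P.rootSet ℂ) : w ∈ P.roots := by
    simpa [mem_rootSet, hP0] using hw
  constructor <;> by_contra! h
  · exact lt_irrefl z.re (convexHull_min (fun w hw ↦ h w (mem_roots_of_mem_rootSet hw))
      (convex_halfSpace_re_gt z.re) hhull)
  · exact lt_irrefl z.re (convexHull_min (fun w hw ↦ h w (mem_roots_of_mem_rootSet hw))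
      (convex_halfSpace_re_lt z.re) hhull)

theorem Hyperbolic.exists_isRoot_le_and_ge_of_isRoot_derivative {P : ℝ[X]} (hP : Hyperbolic P)
    (hdeg : 0 < P.degree) {x : ℝ} (hx : (derivative P).IsRoot x) :
    (∃ r ≤ x, P.IsRoot r) ∧ ∃ r ≥ x, P.IsRoot r := by
  have hx' : (derivative (P.map (algebraMap ℝ ℂ))).IsRoot (algebraMap ℝ ℂ x) := by
    rw [derivative_map]; exact hx.map
  have real_root {w : ℂ} (hw : w ∈ (P.map (algebraMap ℝ ℂ)).roots) : P.IsRoot w.re := by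
    have hw' : w = algebraMap ℝ ℂ w.re := Complex.ext rfl (by simp [hP w hw])
    rw [← isRoot_map_iff (algebraMap ℝ ℂ).injective, ← hw']
    exact isRoot_of_mem_roots hw
  obtain ⟨⟨w, hw, hwx⟩, ⟨w', hw', hxw'⟩⟩ :=
    exists_mem_roots_re_le_and_re_ge_of_isRoot_derivative (by rwa [degree_map]) hx'
  exact ⟨⟨w.re, by simpa using hwx, real_root hw⟩, ⟨w'.re, by simpa using hxw', real_root hw'⟩⟩

theorem eval_le_eval_of_derivative_nonneg {P : ℝ[X]} {u v : ℝ} (huv : u ≤ v)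
    (h : ∀ x ∈ Set.Icc u v, 0 ≤ (derivative P).eval x) : P.eval u ≤ P.eval v := by
  have hmono : MonotoneOn (fun x ↦ P.eval x) (Set.Icc u v) :=
    monotoneOn_of_deriv_nonneg (convex_Icc u v) P.continuousOn
      P.differentiable.differentiableOn fun x hx ↦ by
        rw [Polynomial.deriv]; exact h x (interior_subset hx)
  exact hmono (Set.left_mem_Icc.2 huv) (Set.right_mem_Icc.2 huv) huv

theorem eval_le_eval_of_derivative_nonpos {P : ℝ[X]} {u v : ℝ} (huv : u ≤ v)
    (h : ∀ x ∈ Set.Icc u v, (derivative P).eval x ≤ 0) : P.eval v ≤ P.eval u := by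
  simpa using eval_le_eval_of_derivative_nonneg (P := -P) huv (by simpa using h)

theorem eval_sub_eval_eq_of_derivative_eq {P Q : ℝ[X]} (h : derivative P = derivative Q)
    (x y : ℝ) : P.eval y - P.eval x = Q.eval y - Q.eval x := by
  obtain ⟨k, hk⟩ : ∃ k, P - Q = C k := ⟨_, eq_C_of_derivative_eq_zero (by simp [h])⟩
  have hdiff (z : ℝ) : P.eval z - Q.eval z = k := by rw [← eval_sub, hk, eval_C]
  linarith [hdiff x, hdiff y]

theorem Hyperbolic.eval_nonpos_of_isRoot_derivative {P : ℝ[X]} (hP : Hyperbolic P)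
    (hdeg : 0 < P.degree) {x : ℝ} (hx : (derivative P).IsRoot x)
    (hmono : ∀ y ≥ x, 0 ≤ (derivative P).eval y) : P.eval x ≤ 0 := by
  obtain ⟨r, hxr, hr⟩ := (hP.exists_isRoot_le_and_ge_of_isRoot_derivative hdeg hx).2
  exact hr.eq_zero ▸ eval_le_eval_of_derivative_nonneg hxr fun y hy ↦ hmono y hy.1

theorem Hyperbolic.eval_nonneg_of_isRoot_derivative {P : ℝ[X]} (hP : Hyperbolic P)
    (hdeg : 0 < P.degree) {x : ℝ} (hx : (derivative P).IsRoot x)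
    (hmono : ∀ y ≤ x, 0 ≤ (derivative P).eval y) : 0 ≤ P.eval x := by
  obtain ⟨r, hrx, hr⟩ := (hP.exists_isRoot_le_and_ge_of_isRoot_derivative hdeg hx).1
  exact hr.eq_zero ▸ eval_le_eval_of_derivative_nonneg hrx fun y hy ↦ hmono y hy.2

theorem exists_isRoot_ge {P : ℝ[X]} (hdeg : 0 < P.degree) (hlc : 0 ≤ P.leadingCoeff) {u : ℝ}
    (hu : P.eval u ≤ 0) : ∃ r ≥ u, P.IsRoot r := by
  obtain ⟨v, hv, huv⟩ := ((P.tendsto_atTop_of_leadingCoeff_nonneg hdeg hlc).eventually_ge_atTop 0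
    |>.and (Filter.eventually_ge_atTop u)).exists
  obtain ⟨r, hr, hroot⟩ := intermediate_value_Icc huv P.continuousOn ⟨hu, hv⟩
  exact ⟨r, hr.1, hroot⟩

theorem exists_isRoot_le {P : ℝ[X]} (hodd : Odd P.natDegree) (hlc : 0 ≤ P.leadingCoeff) {u : ℝ}
    (hu : 0 ≤ P.eval u) : ∃ r ≤ u, P.IsRoot r := by
  have hX : (-X : ℝ[X]).natDegree ≠ 0 := by simp
  obtain ⟨r, hr, hroot⟩ := exists_isRoot_ge (P := -P.comp (-X)) (u := -u)
    (by rw [degree_neg, ← natDegree_pos_iff_degree_pos, natDegree_comp]; simpa using hodd.pos)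
    (by simpa [leadingCoeff_comp hX, hodd.neg_one_pow] using hlc) (by simpa using hu)
  exact ⟨-r, by linarith, by simpa using hroot⟩

section Quartic

variable {a b c d : ℝ}

theorem hyperbolic_of_critical_values {P : ℝ[X]}
    (hP : derivative P = (X - C a) * (X - C b) * (X - C c) * (X - C d))
    (hba : b ≤ a) (hcb : c ≤ b) (hdc : d ≤ c) (ha : P.eval a ≤ 0) (hb : 0 ≤ P.eval b)
    (hc : P.eval c ≤ 0) (hd : 0 ≤ P.eval d) : Hyperbolic P := by
  have hP' : derivative P = ∏ i, (X - C (![d, c, b, a] i)) := by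
    rw [hP, Fin.prod_univ_four]; simp only [Fin.isValue, Matrix.cons_val]; ring
  have hdeg : P.natDegree = 5 := natDegree_eq_of_derivative_eq_prod_s6 hP'
  have hlc : 0 ≤ P.leadingCoeff := (leadingCoeff_pos_of_monic_derivative
    (hP' ▸ monic_prod_of_monic _ _ fun i _ ↦ monic_X_sub_C _)).le
  obtain ⟨r₀, hr₀, hroot₀⟩ := exists_isRoot_le (by rw [hdeg]; decide) hlc hd
  obtain ⟨r₁, hr₁, hroot₁⟩ := intermediate_value_Icc' hdc P.continuousOn ⟨hc, hd⟩
  obtain ⟨r₂, hr₂, hroot₂⟩ := intermediate_value_Icc hcb P.continuousOn ⟨hc, hb⟩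
  obtain ⟨r₃, hr₃, hroot₃⟩ := intermediate_value_Icc' hba P.continuousOn ⟨ha, hb⟩
  obtain ⟨r₄, hr₄, hroot₄⟩ :=
    exists_isRoot_ge (natDegree_pos_iff_degree_pos.1 (by rw [hdeg]; decide)) hlc ha
  refine hyperbolic_of_interlacing hP' (r := ![r₀, r₁, r₂, r₃, r₄]) ?_ ?_ ?_
  · intro i; fin_cases i <;> assumption
  · intro i; fin_cases i <;> simp [hr₀, hr₁.2, hr₂.2, hr₃.2]
  · intro i; fin_cases i <;> simp [hr₁.1, hr₂.1, hr₃.1, hr₄]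

theorem Hyperbolic.eval_le_eval_of_derivative_eq {P : ℝ[X]} (hP : Hyperbolic P)
    (hP' : derivative P = (X - C a) * (X - C b) * (X - C c) * (X - C d))
    (hba : b ≤ a) (hcb : c ≤ b) (hdc : d ≤ c) : P.eval a ≤ P.eval d := by
  have hp (x : ℝ) : (derivative P).eval x = (x - a) * (x - b) * (x - c) * (x - d) := by
    simp [hP']
  have hdeg : 0 < P.degree := by
    refine natDegree_pos_iff_degree_pos.1 (Nat.pos_of_ne_zero (derivative_ne_zero.1 ?_))
    rw [hP']
    exact ((((monic_X_sub_C a).mul (monic_X_sub_C b)).mul (monic_X_sub_C c)).mul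
      (monic_X_sub_C d)).ne_zero
  have ha : P.eval a ≤ 0 := hP.eval_nonpos_of_isRoot_derivative hdeg (by simp [IsRoot, hp])
    fun y hy ↦ by
      rw [hp]
      exact mul_nonneg (mul_nonneg (mul_nonneg (sub_nonneg.2 hy) (sub_nonneg.2 (hba.trans hy)))
        (sub_nonneg.2 (hcb.trans (hba.trans hy))))
        (sub_nonneg.2 (hdc.trans (hcb.trans (hba.trans hy))))
  have hd : 0 ≤ P.eval d := hP.eval_nonneg_of_isRoot_derivative hdeg (by simp [IsRoot, hp])
    fun y hy ↦ by
      rw [hp]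
      nlinarith [mul_nonneg (mul_nonneg (sub_nonneg.2 (hy.trans (hdc.trans (hcb.trans hba))))
        (sub_nonneg.2 (hy.trans (hdc.trans hcb)))) (mul_nonneg (sub_nonneg.2 (hy.trans hdc))
        (sub_nonneg.2 hy))]
  linarith

noncomputable def antiderivativeOfRoots (a b c d : ℝ) : ℝ[X] :=
  C (1 / 5) * X ^ 5 - C ((a + b + c + d) / 4) * X ^ 4
    + C ((a * b + a * c + a * d + b * c + b * d + c * d) / 3) * X ^ 3
    - C ((a * b * c + a * b * d + a * c * d + b * c * d) / 2) * X ^ 2 + C (a * b * c * d) * X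

theorem derivative_antiderivativeOfRoots (a b c d : ℝ) :
    derivative (antiderivativeOfRoots a b c d) = (X - C a) * (X - C b) * (X - C c) * (X - C d) := by
  refine Polynomial.funext fun x ↦ ?_
  simp only [antiderivativeOfRoots, one_div, map_mul, derivative_sub,
    derivative_mul, derivative_C, zero_mul, derivative_X_pow_succ, Nat.cast_ofNat, map_add, map_one,
    zero_add, Nat.cast_one, pow_one, mul_zero, add_zero, derivative_X, mul_one, eval_add, eval_sub,
    eval_mul, eval_C, eval_one, eval_pow, eval_X]
  ring

theorem eval_antiderivativeOfRoots_sub_eval (a b c d : ℝ) :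
    (antiderivativeOfRoots a b c d).eval d - (antiderivativeOfRoots a b c d).eval a =
      (a - d) ^ 3 * (6 * a ^ 2 + 6 * d ^ 2 - 10 * a * b - 10 * a * c + 8 * a * d + 20 * b * c
        - 10 * b * d - 10 * c * d) / 120 := by
  simp only [antiderivativeOfRoots, one_div, map_mul, eval_add, eval_sub, eval_mul, eval_C, eval_pow,
    eval_X]
  ring

theorem exists_hyperbolic_antiderivative_iff (hba : b ≤ a) (hcb : c ≤ b) (hdc : d ≤ c) :
    (∃ P : ℝ[X], derivative P = (X - C a) * (X - C b) * (X - C c) * (X - C d) ∧ Hyperbolic P) ↔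
      (antiderivativeOfRoots a b c d).eval a ≤ (antiderivativeOfRoots a b c d).eval d := by
  set P₀ := antiderivativeOfRoots a b c d
  have hP₀ : derivative P₀ = (X - C a) * (X - C b) * (X - C c) * (X - C d) :=
    derivative_antiderivativeOfRoots a b c d
  constructor
  · rintro ⟨P, hP, hhyp⟩
    have := eval_sub_eval_eq_of_derivative_eq (hP.trans hP₀.symm) a d
    linarith [hhyp.eval_le_eval_of_derivative_eq hP hba hcb hdc]
  · intro had
    have hp (x : ℝ) : (derivative P₀).eval x = (x - a) * (x - b) * (x - c) * (x - d) := by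
      simp [hP₀]
    have hcd : P₀.eval c ≤ P₀.eval d := eval_le_eval_of_derivative_nonpos hdc fun x hx ↦ by
      rw [hp]
      nlinarith [mul_nonneg (mul_nonneg (sub_nonneg.2 (hx.2.trans (hcb.trans hba)))
        (sub_nonneg.2 (hx.2.trans hcb))) (mul_nonneg (sub_nonneg.2 hx.2) (sub_nonneg.2 hx.1))]
    have hcb' : P₀.eval c ≤ P₀.eval b := eval_le_eval_of_derivative_nonneg hcb fun x hx ↦ by
      rw [hp]
      nlinarith [mul_nonneg (mul_nonneg (sub_nonneg.2 (hx.2.trans hba))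
        (sub_nonneg.2 hx.2)) (mul_nonneg (sub_nonneg.2 hx.1) (sub_nonneg.2 (hdc.trans hx.1)))]
    have hab : P₀.eval a ≤ P₀.eval b := eval_le_eval_of_derivative_nonpos hba fun x hx ↦ by
      rw [hp]
      nlinarith [mul_nonneg (mul_nonneg (sub_nonneg.2 hx.2) (sub_nonneg.2 hx.1))
        (mul_nonneg (sub_nonneg.2 (hcb.trans hx.1)) (sub_nonneg.2 (hdc.trans (hcb.trans hx.1))))]
    refine ⟨P₀ - C (max (P₀.eval a) (P₀.eval c)), by simp [hP₀],
      hyperbolic_of_critical_values (by simp [hP₀]) hba hcb hdc ?_ ?_ ?_ ?_⟩ <;>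
      simp [had, hcd, hab, hcb']

theorem eval_antiderivativeOfRoots_le_iff (hba : b ≤ a) (hcb : c ≤ b) (hdc : d ≤ c) :
    (antiderivativeOfRoots a b c d).eval a ≤ (antiderivativeOfRoots a b c d).eval d ↔
      0 ≤ 6 * a ^ 2 + 6 * d ^ 2 - 10 * a * b - 10 * a * c + 8 * a * d + 20 * b * c
        - 10 * b * d - 10 * c * d := by
  rw [← sub_nonneg, eval_antiderivativeOfRoots_sub_eval, mul_div_right_comm]
  rcases (hdc.trans (hcb.trans hba)).eq_or_lt with rfl | hda
  · obtain rfl : c = d := le_antisymm (hcb.trans hba) hdc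
    obtain rfl : b = c := le_antisymm hba hcb
    ring_nf
  · exact mul_nonneg_iff_of_pos_left (by have := sub_pos.2 hda; positivity)

end Quartic

theorem stmt_6 (w : Fin 4 → ℝ) (hw : ∀ i j : Fin 4, i ≤ j → w j ≤ w i)
    (p : Polynomial ℝ)
    (hp : p = (X - C (w 0)) * (X - C (w 1)) * (X - C (w 2)) * (X - C (w 3)))
    (A : Matrix (Fin 4) (Fin 4) ℝ)
    (hA : A = !![6, -5, -5, 4; -5, 0, 10, -5; -5, 10, 0, -5; 4, -5, -5, 6]) :
    (∃ P : Polynomial ℝ, derivative P = p ∧ Hyperbolic P) ↔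
      0 ≤ dotProduct w (A.mulVec w) := by
  have h10 := hw 0 1 (by decide)
  have h21 := hw 1 2 (by decide)
  have h32 := hw 2 3 (by decide)
  have hquad : dotProduct w (A.mulVec w) = 6 * w 0 ^ 2 + 6 * w 3 ^ 2 - 10 * w 0 * w 1
      - 10 * w 0 * w 2 + 8 * w 0 * w 3 + 20 * w 1 * w 2 - 10 * w 1 * w 3 - 10 * w 2 * w 3 := by
    simp only [hA, dotProduct, Matrix.mulVec, Matrix.of_apply, Matrix.cons_val', Matrix.cons_val,
      Matrix.cons_val_fin_one, Matrix.cons_val_zero, Matrix.cons_val_one, Fin.sum_univ_four]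
    ring
  rw [hp, exists_hyperbolic_antiderivative_iff h10 h21 h32,
    eval_antiderivativeOfRoots_le_iff h10 h21 h32, hquad]
end

section
/- Let n ≥ 1, let Q be a monic real polynomial of degree n + 1 all of whose complex roots are real, and let w_1 ≥ w_2 ≥ ... ≥ w_n be real numbers such that Q'(x) = (n+1)·∏_{j=1}^{n} (x - w_j). Then Q(w_j) ≥ 0 for every even j ∈ {1, ..., n} and Q(w_j) ≤ 0 for every odd j ∈ {1, ..., n}. -/
open Polynomial

/-!
`Q` splits over `ℝ`. By Rolle's theorem, on any interval `Q` has at most one root more than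
`Q'`; since `Q` has exactly one root more than `Q'` altogether, it has at least as many roots
as `Q'` on every half-line. If `w j` is not a root of `Q`, applying this to
`(w j, ∞)` and `[w j, ∞)` shows that exactly `j` roots of `Q` exceed `w j`, so
`Q(w j) = ∏ (w j - r)` has the sign of `(-1) ^ j`.
-/

theorem Hyperbolic.splits {p : ℝ[X]} (hp : Hyperbolic p) : p.Splits :=
  (IsAlgClosed.splits _).of_splits_map (algebraMap ℝ ℂ) fun z hz =>
    ⟨z.re, Complex.ext (by simp) (by simp [hp z hz])⟩

namespace Polynomial

variable {S : Set ℝ} [DecidablePred (· ∈ S)]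

theorem card_roots_toFinset_filter_le_derivative_sdiff_succ (p : ℝ[X]) (hS : S.OrdConnected) :
    (p.roots.filter (· ∈ S)).toFinset.card ≤
      ((p.derivative.roots.filter (· ∈ S)).toFinset \ (p.roots.filter (· ∈ S)).toFinset).card
        + 1 := by
  rcases eq_or_ne (derivative p) 0 with hp' | hp'
  · rw [eq_C_of_derivative_eq_zero hp']
    simp
  have hp : p ≠ 0 := ne_of_apply_ne derivative (by rwa [derivative_zero])
  refine Finset.card_le_sdiff_of_interleaved fun x hx y hy hxy _ => ?_
  simp only [Multiset.mem_toFinset, Multiset.mem_filter, mem_roots hp] at hx hy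
  obtain ⟨z, hz, hz'⟩ := exists_deriv_eq_zero hxy p.continuousOn (hx.1.trans hy.1.symm)
  refine ⟨z, ?_, hz⟩
  rw [Multiset.mem_toFinset, Multiset.mem_filter, mem_roots hp', IsRoot, ← p.deriv]
  exact ⟨hz', hS.out hx.2 hy.2 (Set.Ioo_subset_Icc_self hz)⟩

theorem card_roots_filter_le_derivative (p : ℝ[X]) (hS : S.OrdConnected) :
    Multiset.card (p.roots.filter (· ∈ S)) ≤
      Multiset.card (p.derivative.roots.filter (· ∈ S)) + 1 := by
  set m := p.roots.filter (· ∈ S)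
  set m' := p.derivative.roots.filter (· ∈ S)
  -- Rolle supplies a new root of `p'` between consecutive distinct roots of `p` in `S`, and
  -- each root of `p` of multiplicity `k` is a root of `p'` of multiplicity `k - 1`.
  have hmult : m - m.dedup ≤ m'.filter (· ∈ m) := by
    rw [Multiset.le_iff_count]
    intro x
    by_cases hx : x ∈ m
    · have hxS : x ∈ S := (Multiset.mem_filter.1 hx).2
      simp only [m, m', Multiset.count_sub, Multiset.count_dedup, Multiset.count_filter_of_pos hx,
        Multiset.count_filter_of_pos hxS, count_roots, if_pos hx]
      exact rootMultiplicity_sub_one_le_derivative_rootMultiplicity p x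
    · simp [Multiset.count_eq_zero.mpr hx]
  have hnew : (m'.toFinset \ m.toFinset).card ≤ Multiset.card (m'.filter (· ∉ m)) := by
    rw [show m'.toFinset \ m.toFinset = (m'.filter (· ∉ m)).toFinset by ext; simp]
    exact Multiset.toFinset_card_le _
  calc Multiset.card m = m.toFinset.card + Multiset.card (m - m.dedup) := by
        rw [Multiset.card_sub (Multiset.dedup_le m), Multiset.card_toFinset]
        have := Multiset.card_le_card (Multiset.dedup_le m)
        omega
    _ ≤ Multiset.card (m'.filter (· ∉ m)) + 1 + Multiset.card (m'.filter (· ∈ m)) := by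
        gcongr
        exact (card_roots_toFinset_filter_le_derivative_sdiff_succ p hS).trans (by gcongr)
    _ = Multiset.card (m'.filter (· ∈ m) + m'.filter (· ∉ m)) + 1 := by
        rw [Multiset.card_add]
        ring
    _ = Multiset.card m' + 1 := by rw [Multiset.filter_add_not]

theorem Splits.card_roots_derivative_filter_le {p : ℝ[X]} (hp : p.Splits) (hS : Sᶜ.OrdConnected) :
    Multiset.card (p.derivative.roots.filter (· ∈ S)) ≤ Multiset.card (p.roots.filter (· ∈ S)) := by
  have hrolle := card_roots_filter_le_derivative p hS
  simp only [Set.mem_compl_iff] at hrolle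
  have hsplit := congrArg Multiset.card (Multiset.filter_add_not (· ∈ S) p.roots)
  have hsplit' := congrArg Multiset.card (Multiset.filter_add_not (· ∈ S) p.derivative.roots)
  have hdeg := (card_roots' p.derivative).trans (natDegree_derivative_le p)
  rw [Multiset.card_add] at hsplit hsplit'
  rw [← hp.natDegree_eq_card_roots] at hsplit
  omega

end Polynomial

theorem Multiset.neg_one_pow_card_filter_lt_mul_prod_sub_nonneg {R : Type*} [CommRing R]
    [LinearOrder R] [IsStrictOrderedRing R] (s : Multiset R) (x : R) :
    0 ≤ (-1) ^ card (s.filter (x < ·)) * (s.map (x - ·)).prod := by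
  induction s using Multiset.induction with
  | empty => simp
  | cons a s ih =>
    rw [map_cons, prod_cons]
    by_cases ha : x < a
    · rw [filter_cons_of_pos _ ha, card_cons, pow_succ]
      convert mul_nonneg (neg_nonneg.2 (sub_nonpos.2 ha.le)) ih using 1
      ring
    · rw [filter_cons_of_neg _ ha]
      convert mul_nonneg (sub_nonneg.2 (not_lt.1 ha)) ih using 1
      ring

section Antitone

variable {α : Type*} [LinearOrder α] {w : ℕ → α} {n j : ℕ}

theorem AntitoneOn.card_filter_lt_apply_lt (hw : AntitoneOn w (Set.Icc 1 n))
    (hj : j ∈ Finset.Icc 1 n) : ((Finset.Icc 1 n).filter (fun i => w j < w i)).card < j := by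
  have hsub : (Finset.Icc 1 n).filter (fun i => w j < w i) ⊆ Finset.Ico 1 j := by
    intro i hi
    simp only [Finset.mem_filter, Finset.mem_Icc, Finset.mem_Ico] at hi hj ⊢
    refine ⟨hi.1.1, lt_of_not_ge fun hji => hi.2.not_ge ?_⟩
    exact hw ⟨hj.1, hj.2⟩ ⟨hi.1.1, hi.1.2⟩ hji
  have := Finset.card_le_card hsub
  rw [Nat.card_Ico] at this
  simp only [Finset.mem_Icc] at hj
  omega

theorem AntitoneOn.le_card_filter_le_apply (hw : AntitoneOn w (Set.Icc 1 n))
    (hj : j ∈ Finset.Icc 1 n) : j ≤ ((Finset.Icc 1 n).filter (fun i => w j ≤ w i)).card := by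
  have hsub : Finset.Icc 1 j ⊆ (Finset.Icc 1 n).filter (fun i => w j ≤ w i) := by
    intro i hi
    simp only [Finset.mem_filter, Finset.mem_Icc] at hi hj ⊢
    exact ⟨⟨hi.1, hi.2.trans hj.2⟩, hw ⟨hi.1, hi.2.trans hj.2⟩ ⟨hj.1, hj.2⟩ hi.2⟩
  simpa using Finset.card_le_card hsub

end Antitone

namespace Polynomial

theorem Splits.card_roots_filter_lt_eq_of_roots_derivative {Q : ℝ[X]} (hQ : Q.Splits)
    {w : ℕ → ℝ} {n j : ℕ} (hw : AntitoneOn w (Set.Icc 1 n))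
    (hroots : Q.derivative.roots = (Finset.Icc 1 n).val.map w) (hj : j ∈ Finset.Icc 1 n)
    (hQj : ¬ Q.IsRoot (w j)) : Multiset.card (Q.roots.filter (w j < ·)) = j := by
  classical
  have hcount (S : Set ℝ) [DecidablePred (· ∈ S)] :
      Multiset.card (Q.derivative.roots.filter (· ∈ S)) =
        ((Finset.Icc 1 n).filter (fun i => w i ∈ S)).card := by
    rw [hroots, Multiset.filter_map, Multiset.card_map]
    rfl
  apply le_antisymm
  · calc Multiset.card (Q.roots.filter (· ∈ Set.Ioi (w j)))
        ≤ Multiset.card (Q.derivative.roots.filter (· ∈ Set.Ioi (w j))) + 1 :=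
          card_roots_filter_le_derivative Q Set.ordConnected_Ioi
      _ ≤ j := by rw [hcount]; exact hw.card_filter_lt_apply_lt hj
  · calc j ≤ ((Finset.Icc 1 n).filter (fun i => w j ≤ w i)).card := hw.le_card_filter_le_apply hj
      _ = Multiset.card (Q.derivative.roots.filter (· ∈ Set.Ici (w j))) := (hcount _).symm
      _ ≤ Multiset.card (Q.roots.filter (· ∈ Set.Ici (w j))) :=
          hQ.card_roots_derivative_filter_le (by rw [Set.compl_Ici]; exact Set.ordConnected_Iio)
      _ = Multiset.card (Q.roots.filter (w j < ·)) := by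
          refine congrArg _ (Multiset.filter_congr fun r hr => ?_)
          have hr : r ≠ w j := fun h => hQj (h ▸ (mem_roots'.1 hr).2)
          exact ⟨fun h => lt_of_le_of_ne h hr.symm, le_of_lt⟩

end Polynomial

theorem stmt_11_general (n : ℕ) (Q : Polynomial ℝ)
    (hQmonic : Q.Monic) (hQhyp : Hyperbolic Q)
    (w : ℕ → ℝ) (hw : ∀ i ∈ Finset.Ico 1 n, w (i + 1) ≤ w i)
    (hQ' : derivative Q = C ((n : ℝ) + 1) * ∏ j ∈ Finset.Icc 1 n, (X - C (w j))) :
    (∀ j ∈ Finset.Icc 1 n, Even j → 0 ≤ Q.eval (w j)) ∧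
      (∀ j ∈ Finset.Icc 1 n, Odd j → Q.eval (w j) ≤ 0) := by
  have hQ : Q.Splits := hQhyp.splits
  have hanti : AntitoneOn w (Set.Icc 1 n) :=
    antitoneOn_of_succ_le Set.ordConnected_Icc fun i _ hi hi' =>
      hw i (Finset.mem_Ico.2 ⟨hi.1, Order.succ_le_iff.1 hi'.2⟩)
  have hroots : Q.derivative.roots = (Finset.Icc 1 n).val.map w := by
    rw [hQ', roots_C_mul _ (by positivity),
      roots_prod _ _ (Finset.prod_ne_zero_iff.2 fun j _ => X_sub_C_ne_zero (w j))]
    simp only [roots_X_sub_C, Multiset.bind_singleton]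
  have hsign : ∀ j ∈ Finset.Icc 1 n, 0 ≤ (-1) ^ j * Q.eval (w j) := by
    intro j hj
    by_cases hQj : Q.IsRoot (w j)
    · simp [hQj.eq_zero]
    have hprod := Q.roots.neg_one_pow_card_filter_lt_mul_prod_sub_nonneg (w j)
    rwa [hQ.card_roots_filter_lt_eq_of_roots_derivative hanti hroots hj hQj,
      ← hQ.eval_eq_prod_roots_of_monic hQmonic] at hprod
  exact ⟨fun j hj hj2 => by simpa [hj2.neg_one_pow] using hsign j hj,
    fun j hj hj2 => by simpa [hj2.neg_one_pow] using hsign j hj⟩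

theorem stmt_11 (n : ℕ) (hn : 1 ≤ n) (Q : Polynomial ℝ)
    (hQmonic : Q.Monic) (hQdeg : Q.natDegree = n + 1) (hQhyp : Hyperbolic Q)
    (w : ℕ → ℝ) (hw : ∀ i ∈ Finset.Ico 1 n, w (i + 1) ≤ w i)
    (hQ' : derivative Q = C ((n : ℝ) + 1) * ∏ j ∈ Finset.Icc 1 n, (X - C (w j))) :
    (∀ j ∈ Finset.Icc 1 n, Even j → 0 ≤ Q.eval (w j)) ∧
      (∀ j ∈ Finset.Icc 1 n, Odd j → Q.eval (w j) ≤ 0) :=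
  stmt_11_general n Q hQmonic hQhyp w hw hQ'
end
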